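/- arXiv:2205.02163 — 3 statements merged into one kernel-verified Lean document; each statement's English description precedes it below -/
import Mathlib

section
/- For every real t with 2 < t < 3 there exists a constant C_t > 0 such that for all reals s, h with 0 < h ≤ s, for the rectangular box Q = [0,s] × [0,s] × [0,h] ⊆ ℝ³, and for every point x ∈ Q, one has ∫_Q |x − y|^{−t} dy ≤ C_t h^{3−t}, where the integral is with respect to Lebesgue measure on ℝ³ and |x − y| is the Euclidean distance. -/
open MeasureTheory Set

lemma stmt5_coord (v : EuclideanSpace ℝ (Fin 3)) (i : Fin 3) : |v i| ≤ ‖v‖ := by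
  rw [EuclideanSpace.norm_eq]
  have h1 : ‖v i‖ ^ 2 ≤ ∑ j, ‖v j‖ ^ 2 :=
    Finset.single_le_sum (fun j _ => sq_nonneg ‖v j‖) (Finset.mem_univ i)
  calc |v i| = Real.sqrt (‖v i‖ ^ 2) := by
        rw [Real.sqrt_sq_eq_abs, Real.norm_eq_abs, abs_abs]
    _ ≤ _ := Real.sqrt_le_sqrt h1

lemma stmt5_box (a b : Fin 3 → ℝ) :
    volume {y : EuclideanSpace ℝ (Fin 3) | ∀ i, y i ∈ Set.Icc (a i) (b i)} =
      ENNReal.ofReal (b 0 - a 0) * ENNReal.ofReal (b 1 - a 1) * ENNReal.ofReal (b 2 - a 2) := by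
  have hmp := EuclideanSpace.volume_preserving_symm_measurableEquiv_toLp (Fin 3)
  have hms : MeasurableSet (Set.pi Set.univ fun i => Icc (a i) (b i)) :=
    MeasurableSet.univ_pi fun i => measurableSet_Icc
  have hset : {y : EuclideanSpace ℝ (Fin 3) | ∀ i, y i ∈ Set.Icc (a i) (b i)} =
      (MeasurableEquiv.toLp 2 (Fin 3 → ℝ)).symm ⁻¹' (Set.pi Set.univ fun i => Icc (a i) (b i)) := by
    ext y
    simp [Set.mem_pi, Pi.le_def, forall_and]
  rw [hset, hmp.measure_preimage hms.nullMeasurableSet, volume_pi_pi]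
  simp [Real.volume_Icc, Fin.prod_univ_three]

lemma stmt5_zpow_rpow (x : ℝ) (hx : 0 ≤ x) (k : ℤ) (c : ℝ) : (x ^ k) ^ c = (x ^ c) ^ k := by
  rw [← Real.rpow_intCast x k, ← Real.rpow_mul hx, mul_comm, Real.rpow_mul hx,
    Real.rpow_intCast]

theorem stmt5 (t : ℝ) (ht1 : 2 < t) (ht2 : t < 3) :
    ∃ C : ℝ, 0 < C ∧ ∀ s h : ℝ, 0 < h → h ≤ s →
      ∀ x : EuclideanSpace ℝ (Fin 3),
        x 0 ∈ Set.Icc 0 s → x 1 ∈ Set.Icc 0 s → x 2 ∈ Set.Icc 0 h →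
        (∫ y in {y : EuclideanSpace ℝ (Fin 3) |
            y 0 ∈ Set.Icc 0 s ∧ y 1 ∈ Set.Icc 0 s ∧ y 2 ∈ Set.Icc 0 h},
          ‖x - y‖ ^ (-t)) ≤ C * h ^ (3 - t) := by
  set r1 : ℝ := 2 ^ (2 - t) with hr1
  set r2 : ℝ := 2 ^ (3 - t) with hr2
  have hr1pos : 0 < r1 := Real.rpow_pos_of_pos two_pos _
  have hr2pos : 0 < r2 := Real.rpow_pos_of_pos two_pos _
  have hr1lt : r1 < 1 := Real.rpow_lt_one_of_one_lt_of_neg one_lt_two (by linarith)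
  have hr2gt : 1 < r2 :=
    (Real.one_lt_rpow_iff_of_pos two_pos).mpr (Or.inl ⟨one_lt_two, by linarith⟩)
  set c : ℤ → ℝ := fun k => if 0 ≤ k then 16 * r1 ^ k else 64 * r2 ^ k with hc
  have hcnonneg : ∀ k, 0 ≤ c k := by
    intro k
    by_cases hk : 0 ≤ k <;> simp only [hc, hk, if_true, if_false] <;> positivity
  have hsum : Summable c := by
    apply Summable.of_nat_of_neg
    · have he : (fun n : ℕ => c n) = fun n : ℕ => 16 * r1 ^ n := by
        funext n
        simp [hc, Int.ofNat_nonneg n, zpow_natCast]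
      rw [he]
      exact (summable_geometric_of_lt_one hr1pos.le hr1lt).mul_left 16
    · have hinv : r2⁻¹ < 1 := inv_lt_one_of_one_lt₀ hr2gt
      refine Summable.of_nonneg_of_le (fun n => hcnonneg _) (fun n => ?_)
        ((summable_geometric_of_lt_one (by positivity) hinv).mul_left 64)
      rcases Nat.eq_zero_or_pos n with rfl | hn
      · simp [hc]; norm_num
      · have hkneg : ¬ (0 : ℤ) ≤ -(n : ℤ) := by omega
        simp only [hc, hkneg, if_false]
        have : r2 ^ (-(n : ℤ)) = (r2⁻¹) ^ n := by
          rw [zpow_neg, zpow_natCast, inv_pow]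
        rw [this]
  have hCpos : 0 < ∑' k, c k := by
    refine Summable.tsum_pos hsum hcnonneg 0 ?_
    simp [hc]
  refine ⟨∑' k, c k, hCpos, ?_⟩
  intro s h hh hhs x hx0 hx1 hx2
  set Q : Set (EuclideanSpace ℝ (Fin 3)) :=
    {y : EuclideanSpace ℝ (Fin 3) |
      y 0 ∈ Set.Icc 0 s ∧ y 1 ∈ Set.Icc 0 s ∧ y 2 ∈ Set.Icc 0 h} with hQdef
  have hfm : Measurable fun y : EuclideanSpace ℝ (Fin 3) => ‖x - y‖ ^ (-t) := by fun_prop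
  have hCh : 0 ≤ (∑' k, c k) * h ^ (3 - t) :=
    mul_nonneg hCpos.le (Real.rpow_nonneg hh.le _)
  rw [integral_eq_lintegral_of_nonneg_ae
    (ae_of_all _ fun y => Real.rpow_nonneg (norm_nonneg _) _) hfm.aestronglyMeasurable]
  apply ENNReal.toReal_le_of_le_ofReal hCh
  set S : ℤ → Set (EuclideanSpace ℝ (Fin 3)) := fun k =>
    Q ∩ {y | h * 2 ^ k < ‖x - y‖ ∧ ‖x - y‖ ≤ h * 2 ^ (k + 1)} with hSdef
  have hQsub : Q ⊆ {x} ∪ ⋃ k : ℤ, S k := by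
    intro y hy
    by_cases hxy : y = x
    · left; simp [hxy]
    · right
      have hpos : 0 < ‖x - y‖ := by
        rw [norm_pos_iff, sub_ne_zero]
        exact Ne.symm hxy
      obtain ⟨k, hk1, hk2⟩ := exists_mem_Ioc_zpow (div_pos hpos hh) one_lt_two
      refine mem_iUnion.mpr ⟨k, hy, ?_, ?_⟩
      · have := (lt_div_iff₀ hh).mp hk1
        linarith [this]
      · have := (div_le_iff₀ hh).mp hk2
        linarith [this]
  have hshell : ∀ k : ℤ, (∫⁻ y in S k, ENNReal.ofReal (‖x - y‖ ^ (-t))) ≤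
      ENNReal.ofReal (h ^ (3 - t)) * ENNReal.ofReal (c k) := by
    intro k
    set ρ : ℝ := h * 2 ^ k with hρdef
    have hρpos : 0 < ρ := mul_pos hh (zpow_pos two_pos k)
    have h2k1 : h * 2 ^ (k + 1) = 2 * ρ := by
      rw [hρdef, zpow_add₀ (two_ne_zero) k 1, zpow_one]; ring
    have hmono : (∫⁻ y in S k, ENNReal.ofReal (‖x - y‖ ^ (-t))) ≤
        ENNReal.ofReal (ρ ^ (-t)) * volume (S k) := by
      refine le_trans (setLIntegral_mono measurable_const (fun y hy => ?_))
        (le_of_eq (setLIntegral_const _ _))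
      exact ENNReal.ofReal_le_ofReal
        (Real.rpow_le_rpow_of_nonpos hρpos hy.2.1.le (by linarith))
    have hvol : volume (S k) ≤
        ENNReal.ofReal (4 * ρ) * ENNReal.ofReal (4 * ρ) * ENNReal.ofReal (min (4 * ρ) h) := by
      set A : Fin 3 → ℝ := ![x 0 - 2 * ρ, x 1 - 2 * ρ, max (x 2 - 2 * ρ) 0] with hA
      set B : Fin 3 → ℝ := ![x 0 + 2 * ρ, x 1 + 2 * ρ, min (x 2 + 2 * ρ) h] with hB
      have hsub : S k ⊆ {y : EuclideanSpace ℝ (Fin 3) | ∀ i, y i ∈ Set.Icc (A i) (B i)} := by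
        rintro y ⟨hyQ, hlt, hle⟩
        have hle2 : ‖x - y‖ ≤ 2 * ρ := by rw [← h2k1]; exact hle
        have hcoord : ∀ i : Fin 3, |x i - y i| ≤ 2 * ρ := by
          intro i
          have h1 := stmt5_coord (x - y) i
          have h2 : (x - y) i = x i - y i := rfl
          rw [h2] at h1
          exact h1.trans hle2
        intro i
        fin_cases i
        · have := abs_le.mp (hcoord 0)
          constructor <;> simp [hA, hB] <;> linarith [this.1, this.2]
        · have := abs_le.mp (hcoord 1)
          constructor <;> simp [hA, hB] <;> linarith [this.1, this.2]
        · have h1 := abs_le.mp (hcoord 2)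
          have h2 := hyQ.2.2
          show y 2 ∈ Set.Icc (A 2) (B 2)
          simp only [hA, hB, Set.mem_Icc, Fin.isValue, Matrix.cons_val_two,
            Matrix.tail_cons, Matrix.head_cons]
          exact ⟨max_le (by linarith [h1.2]) h2.1, le_min (by linarith [h1.1]) h2.2⟩
      calc volume (S k) ≤ volume {y : EuclideanSpace ℝ (Fin 3) | ∀ i, y i ∈ Set.Icc (A i) (B i)} :=
            measure_mono hsub
        _ = ENNReal.ofReal (B 0 - A 0) * ENNReal.ofReal (B 1 - A 1) *
              ENNReal.ofReal (B 2 - A 2) := stmt5_box A B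
        _ ≤ ENNReal.ofReal (4 * ρ) * ENNReal.ofReal (4 * ρ) *
              ENNReal.ofReal (min (4 * ρ) h) := by
            have e0 : B 0 - A 0 = 4 * ρ := by simp [hA, hB]; ring
            have e1 : B 1 - A 1 = 4 * ρ := by simp [hA, hB]; ring
            have e2 : B 2 - A 2 ≤ min (4 * ρ) h := by
              simp only [hA, hB, Matrix.cons_val_two, Matrix.tail_cons, Matrix.head_cons]
              refine le_min ?_ ?_
              · have := min_le_left (x 2 + 2 * ρ) h
                have := le_max_left (x 2 - 2 * ρ) 0
                linarith
              · have := min_le_right (x 2 + 2 * ρ) h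
                have := le_max_right (x 2 - 2 * ρ) 0
                linarith
            rw [e0, e1]
            exact mul_le_mul_right (ENNReal.ofReal_le_ofReal e2) _
    have hreal : ρ ^ (-t) * (4 * ρ * (4 * ρ) * min (4 * ρ) h) ≤ h ^ (3 - t) * c k := by
      have hρt : 0 ≤ ρ ^ (-t) := Real.rpow_nonneg hρpos.le _
      by_cases hk : 0 ≤ k
      · have hmin : min (4 * ρ) h ≤ h := min_le_right _ _
        have key : ρ ^ (-t) * (4 * ρ * (4 * ρ) * h) = h ^ (3 - t) * (16 * r1 ^ k) := by
          have e1 : ρ ^ (-t) * ρ * ρ = ρ ^ (2 - t) := by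
            rw [show (2 : ℝ) - t = -t + 1 + 1 by ring, Real.rpow_add hρpos,
              Real.rpow_add hρpos, Real.rpow_one]
          have e2 : ρ ^ (2 - t) = h ^ (2 - t) * r1 ^ k := by
            rw [hρdef, Real.mul_rpow hh.le (zpow_nonneg two_pos.le k),
              stmt5_zpow_rpow 2 two_pos.le k (2 - t)]
          have e3 : h ^ (2 - t) * h = h ^ (3 - t) := by
            rw [show (3 : ℝ) - t = 2 - t + 1 by ring, Real.rpow_add hh, Real.rpow_one]
          calc ρ ^ (-t) * (4 * ρ * (4 * ρ) * h) = 16 * (ρ ^ (-t) * ρ * ρ) * h := by ring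
            _ = 16 * (h ^ (2 - t) * r1 ^ k) * h := by rw [e1, e2]
            _ = (h ^ (2 - t) * h) * (16 * r1 ^ k) := by ring
            _ = h ^ (3 - t) * (16 * r1 ^ k) := by rw [e3]
        have hc1 : c k = 16 * r1 ^ k := by simp [hc, hk]
        rw [hc1, ← key]
        have h4ρ : (0:ℝ) ≤ 4 * ρ * (4 * ρ) := by positivity
        nlinarith [mul_le_mul_of_nonneg_left hmin h4ρ]
      · have hmin : min (4 * ρ) h ≤ 4 * ρ := min_le_left _ _
        have key : ρ ^ (-t) * (4 * ρ * (4 * ρ) * (4 * ρ)) = h ^ (3 - t) * (64 * r2 ^ k) := by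
          have e1 : ρ ^ (-t) * ρ * ρ * ρ = ρ ^ (3 - t) := by
            rw [show (3 : ℝ) - t = -t + 1 + 1 + 1 by ring, Real.rpow_add hρpos,
              Real.rpow_add hρpos, Real.rpow_add hρpos, Real.rpow_one]
          have e2 : ρ ^ (3 - t) = h ^ (3 - t) * r2 ^ k := by
            rw [hρdef, Real.mul_rpow hh.le (zpow_nonneg two_pos.le k),
              stmt5_zpow_rpow 2 two_pos.le k (3 - t)]
          calc ρ ^ (-t) * (4 * ρ * (4 * ρ) * (4 * ρ)) = 64 * (ρ ^ (-t) * ρ * ρ * ρ) := by ring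
            _ = 64 * (h ^ (3 - t) * r2 ^ k) := by rw [e1, e2]
            _ = h ^ (3 - t) * (64 * r2 ^ k) := by ring
        have hc1 : c k = 64 * r2 ^ k := by simp [hc, hk]
        rw [hc1, ← key]
        have h4ρ : (0:ℝ) ≤ 4 * ρ * (4 * ρ) := by positivity
        nlinarith [mul_le_mul_of_nonneg_left hmin h4ρ]
    calc (∫⁻ y in S k, ENNReal.ofReal (‖x - y‖ ^ (-t)))
        ≤ ENNReal.ofReal (ρ ^ (-t)) * volume (S k) := hmono
      _ ≤ ENNReal.ofReal (ρ ^ (-t)) *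
            (ENNReal.ofReal (4 * ρ) * ENNReal.ofReal (4 * ρ) *
              ENNReal.ofReal (min (4 * ρ) h)) := mul_le_mul_right hvol _
      _ = ENNReal.ofReal (ρ ^ (-t) * (4 * ρ * (4 * ρ) * min (4 * ρ) h)) := by
          rw [← ENNReal.ofReal_mul (by positivity), ← ENNReal.ofReal_mul (by positivity),
            ← ENNReal.ofReal_mul (Real.rpow_nonneg hρpos.le _)]
      _ ≤ ENNReal.ofReal (h ^ (3 - t) * c k) := ENNReal.ofReal_le_ofReal hreal
      _ = ENNReal.ofReal (h ^ (3 - t)) * ENNReal.ofReal (c k) :=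
          ENNReal.ofReal_mul (Real.rpow_nonneg hh.le _)
  calc (∫⁻ y in Q, ENNReal.ofReal (‖x - y‖ ^ (-t)))
      ≤ ∫⁻ y in {x} ∪ ⋃ k : ℤ, S k, ENNReal.ofReal (‖x - y‖ ^ (-t)) :=
        lintegral_mono_set hQsub
    _ ≤ (∫⁻ y in ({x} : Set (EuclideanSpace ℝ (Fin 3))), ENNReal.ofReal (‖x - y‖ ^ (-t)))
          + ∫⁻ y in ⋃ k : ℤ, S k, ENNReal.ofReal (‖x - y‖ ^ (-t)) :=
        lintegral_union_le _ _ _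
    _ ≤ 0 + ∑' k : ℤ, ∫⁻ y in S k, ENNReal.ofReal (‖x - y‖ ^ (-t)) := by
        gcongr
        · rw [lintegral_singleton]
          simp [Real.zero_rpow (by intro hce; apply absurd hce; intro hce2; linarith : -t ≠ 0)]
        · exact lintegral_iUnion_le _ _
    _ ≤ ∑' k : ℤ, ENNReal.ofReal (h ^ (3 - t)) * ENNReal.ofReal (c k) := by
        rw [zero_add]
        exact ENNReal.tsum_le_tsum hshell
    _ = ENNReal.ofReal (h ^ (3 - t)) * ∑' k : ℤ, ENNReal.ofReal (c k) :=
        ENNReal.tsum_mul_left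
    _ = ENNReal.ofReal (h ^ (3 - t)) * ENNReal.ofReal (∑' k, c k) := by
        rw [ENNReal.ofReal_tsum_of_nonneg hcnonneg hsum]
    _ = ENNReal.ofReal ((∑' k, c k) * h ^ (3 - t)) := by
        rw [← ENNReal.ofReal_mul (Real.rpow_nonneg hh.le _), mul_comm]
end

section
/- Fix a real constant κ > 0. There exists a constant C = C(κ) > 0 such that for all real β with |β| ≤ 1 and all real λ with |λ| ≥ 1, the phase φ_β(r) = βr − (1/2)r⁴ − κ r⁸ satisfies | ∫_0^1 e^{−2πiλ φ_β(r)} r dr | ≤ C |λ|^{−1/2}. -/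
open MeasureTheory Set intervalIntegral

lemma ibp (Λ a b : ℝ) (hΛ : Λ ≠ 0) (hab : a ≤ b)
    (φ φd v vd : ℝ → ℝ)
    (hφ : ∀ x ∈ Icc a b, HasDerivAt φ (φd x) x)
    (hv : ∀ x ∈ Icc a b, HasDerivAt v (vd x) x)
    (hφd : ContinuousOn φd (Icc a b))
    (hvd : ContinuousOn vd (Icc a b)) :
    ‖∫ x in a..b, Complex.exp ((Λ * φ x : ℝ) * Complex.I) * ((φd x : ℂ) * (v x : ℂ))‖ ≤
      (|v a| + |v b| + ∫ x in a..b, |vd x|) / |Λ| := by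
  have hicc : uIcc a b = Icc a b := uIcc_of_le hab
  set e : ℝ → ℂ := fun x => Complex.exp ((Λ * φ x : ℝ) * Complex.I) with he
  have hφc : ContinuousOn φ (Icc a b) := fun x hx => (hφ x hx).continuousAt.continuousWithinAt
  have hvc : ContinuousOn v (Icc a b) := fun x hx => (hv x hx).continuousAt.continuousWithinAt
  have hec : ContinuousOn e (Icc a b) := by
    apply Complex.continuous_exp.comp_continuousOn
    exact ((Complex.continuous_ofReal.comp_continuousOn (hφc.const_smul Λ)).mul continuousOn_const)
  have hnorme : ∀ x, ‖e x‖ = 1 := fun x => Complex.norm_exp_ofReal_mul_I _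
  have hH : ∀ x ∈ Icc a b, HasDerivAt (fun y => e y * (v y : ℂ))
      ((Λ : ℂ) * Complex.I * (e x * ((φd x : ℂ) * (v x : ℂ))) + e x * ((vd x : ℝ) : ℂ)) x := by
    intro x hx
    have h1 : HasDerivAt (fun y => ((Λ * φ y : ℝ) : ℂ) * Complex.I)
        (((Λ * φd x : ℝ) : ℂ) * Complex.I) x :=
      (((hφ x hx).const_mul Λ).ofReal_comp).mul_const _
    have h2 := h1.cexp
    have h3 : HasDerivAt (fun y => ((v y : ℝ) : ℂ)) ((vd x : ℝ) : ℂ) x := (hv x hx).ofReal_comp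
    have h4 := h2.mul h3
    refine h4.congr_deriv ?_
    simp only [he]
    push_cast
    ring_nf
  have hInt1 : IntervalIntegrable (fun x => (Λ : ℂ) * Complex.I * (e x * ((φd x : ℂ) * (v x : ℂ))))
      volume a b := by
    apply ContinuousOn.intervalIntegrable
    rw [hicc]
    exact (continuousOn_const.mul (hec.mul
      ((Complex.continuous_ofReal.comp_continuousOn hφd).mul
        (Complex.continuous_ofReal.comp_continuousOn hvc))))
  have hInt2 : IntervalIntegrable (fun x => e x * ((vd x : ℝ) : ℂ)) volume a b := by
    apply ContinuousOn.intervalIntegrable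
    rw [hicc]
    exact hec.mul (Complex.continuous_ofReal.comp_continuousOn hvd)
  have key : (∫ x in a..b, ((Λ : ℂ) * Complex.I * (e x * ((φd x : ℂ) * (v x : ℂ)))
        + e x * ((vd x : ℝ) : ℂ))) = e b * (v b : ℂ) - e a * (v a : ℂ) := by
    apply intervalIntegral.integral_eq_sub_of_hasDerivAt
    · intro x hx
      exact hH x (hicc ▸ hx)
    · exact hInt1.add hInt2
  rw [intervalIntegral.integral_add hInt1 hInt2, intervalIntegral.integral_const_mul] at key
  have hne : (Λ : ℂ) * Complex.I ≠ 0 :=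
    mul_ne_zero (Complex.ofReal_ne_zero.2 hΛ) Complex.I_ne_zero
  have hT : (∫ x in a..b, e x * ((φd x : ℂ) * (v x : ℂ)))
      = (e b * (v b : ℂ) - e a * (v a : ℂ) - ∫ x in a..b, e x * ((vd x : ℝ) : ℂ))
        / ((Λ : ℂ) * Complex.I) := by
    rw [eq_div_iff hne]
    linear_combination key
  rw [hT, norm_div]
  have hden : ‖(Λ : ℂ) * Complex.I‖ = |Λ| := by
    simp [Complex.norm_real]
  rw [hden]
  apply div_le_div_of_nonneg_right ?_ (abs_nonneg Λ)
  have hnx : ∀ x, ‖e x * ((v x : ℝ) : ℂ)‖ = |v x| := by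
    intro x; rw [norm_mul, hnorme, one_mul, Complex.norm_real, Real.norm_eq_abs]
  calc ‖e b * (v b : ℂ) - e a * (v a : ℂ) - ∫ x in a..b, e x * ((vd x : ℝ) : ℂ)‖
      ≤ ‖e b * (v b : ℂ) - e a * (v a : ℂ)‖ + ‖∫ x in a..b, e x * ((vd x : ℝ) : ℂ)‖ :=
        norm_sub_le _ _
    _ ≤ (‖e b * (v b : ℂ)‖ + ‖e a * (v a : ℂ)‖) + ‖∫ x in a..b, e x * ((vd x : ℝ) : ℂ)‖ := by
        gcongr; exact norm_sub_le _ _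
    _ ≤ (|v b| + |v a|) + ∫ x in a..b, |vd x| := by
        rw [hnx, hnx]
        gcongr
        calc ‖∫ x in a..b, e x * ((vd x : ℝ) : ℂ)‖
            ≤ ∫ x in a..b, ‖e x * ((vd x : ℝ) : ℂ)‖ :=
              intervalIntegral.norm_integral_le_integral_norm hab
          _ = ∫ x in a..b, |vd x| := by
              apply intervalIntegral.integral_congr
              intro x _
              simp only [norm_mul, hnorme, one_mul, Complex.norm_real, Real.norm_eq_abs]
    _ = |v a| + |v b| + ∫ x in a..b, |vd x| := by ring

lemma ibp_mono (Λ a b : ℝ) (hΛ : Λ ≠ 0) (hab : a ≤ b)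
    (φ φd v vd : ℝ → ℝ)
    (hφ : ∀ x ∈ Icc a b, HasDerivAt φ (φd x) x)
    (hv : ∀ x ∈ Icc a b, HasDerivAt v (vd x) x)
    (hφd : ContinuousOn φd (Icc a b))
    (hvd : ContinuousOn vd (Icc a b))
    (hvd0 : ∀ x ∈ Icc a b, 0 ≤ vd x) :
    ‖∫ x in a..b, Complex.exp ((Λ * φ x : ℝ) * Complex.I) * ((φd x : ℂ) * (v x : ℂ))‖ ≤
      (2 * (|v a| + |v b|)) / |Λ| := by
  refine (ibp Λ a b hΛ hab φ φd v vd hφ hv hφd hvd).trans ?_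
  apply div_le_div_of_nonneg_right ?_ (abs_nonneg Λ)
  have hicc : uIcc a b = Icc a b := uIcc_of_le hab
  have hint : IntervalIntegrable vd volume a b :=
    (hvd.mono (by rw [hicc])).intervalIntegrable
  have h1 : (∫ x in a..b, |vd x|) = ∫ x in a..b, vd x := by
    apply intervalIntegral.integral_congr
    intro x hx
    exact abs_of_nonneg (hvd0 x (hicc ▸ hx))
  have h2 : (∫ x in a..b, vd x) = v b - v a := by
    apply intervalIntegral.integral_eq_sub_of_hasDerivAt
    · intro x hx; exact hv x (hicc ▸ hx)
    · exact hint
  rw [h1, h2]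
  have h3 : v b - v a ≤ |v b| + |v a| := (le_abs_self _).trans (abs_sub _ _)
  linarith

lemma phase_deriv (κ β : ℝ) (x : ℝ) :
    HasDerivAt (fun y : ℝ => β*y - y^4/2 - κ*y^8) (β - 2*x^3 - 8*κ*x^7) x := by
  have h := (((hasDerivAt_id x).const_mul β).sub
    ((hasDerivAt_pow 4 x).div_const 2)).sub ((hasDerivAt_pow 8 x).const_mul κ)
  refine h.congr_deriv ?_
  push_cast
  ring

lemma P_deriv (κ β : ℝ) (x : ℝ) :
    HasDerivAt (fun y : ℝ => β - 2*y^3 - 8*κ*y^7) (-(6*x^2) - 56*κ*x^6) x := by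
  have h := (((hasDerivAt_const x β).sub
    ((hasDerivAt_pow 3 x).const_mul 2)).sub ((hasDerivAt_pow 7 x).const_mul (8*κ)))
  refine h.congr_deriv ?_
  push_cast
  ring

lemma piece_mono (κ β Λ a b : ℝ) (hΛ : Λ ≠ 0) (hab : a ≤ b) (ha : 0 ≤ a) (hβ : 0 ≤ β)
    (hκ : 0 ≤ κ)
    (hne : ∀ x ∈ Icc a b, β - 2*x^3 - 8*κ*x^7 ≠ 0) :
    ‖∫ x in a..b, Complex.exp ((Λ * (β*x - x^4/2 - κ*x^8) : ℝ) * Complex.I) * (x:ℂ)‖ ≤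
      (2 * (|a / (β - 2*a^3 - 8*κ*a^7)| + |b / (β - 2*b^3 - 8*κ*b^7)|)) / |Λ| := by
  have hicc : uIcc a b = Icc a b := uIcc_of_le hab
  set P : ℝ → ℝ := fun x => β - 2*x^3 - 8*κ*x^7 with hP
  set v : ℝ → ℝ := fun x => x / P x with hv
  set vd : ℝ → ℝ := fun x => (β + 4*x^3 + 48*κ*x^7) / (P x)^2 with hvd
  have hPc : Continuous P := by fun_prop
  have hvD : ∀ x ∈ Icc a b, HasDerivAt v (vd x) x := by
    intro x hx
    have h := (hasDerivAt_id x).div (P_deriv κ β x) (hne x hx)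
    refine h.congr_deriv ?_
    simp only [hvd, hP]
    congr 1
    simp [id]
    ring
  have hcong : (∫ x in a..b, Complex.exp ((Λ * (β*x - x^4/2 - κ*x^8) : ℝ) * Complex.I) * (x:ℂ))
      = ∫ x in a..b, Complex.exp ((Λ * (β*x - x^4/2 - κ*x^8) : ℝ) * Complex.I)
          * ((P x : ℂ) * (v x : ℂ)) := by
    apply intervalIntegral.integral_congr
    intro x hx
    have hne' := hne x (hicc ▸ hx)
    simp only [hv]
    congr 1
    rw [← Complex.ofReal_mul]
    congr 1
    field_simp
    exact (mul_div_cancel_right₀ x hne').symm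
  rw [hcong]
  have := ibp_mono Λ a b hΛ hab (fun y => β*y - y^4/2 - κ*y^8) P v vd
    (fun x _ => phase_deriv κ β x) hvD hPc.continuousOn
    (ContinuousOn.div (by fun_prop) ((hPc.continuousOn).pow 2)
      (fun x hx => pow_ne_zero 2 (hne x hx)))
    (fun x hx => by
      apply div_nonneg ?_ (sq_nonneg _)
      have h0 : 0 ≤ x := le_trans ha hx.1
      positivity)
  exact this

lemma piece_tv (κ β Λ a : ℝ) (hΛ : Λ ≠ 0) (ha : 0 < a) (ha1 : a ≤ 1)
    (hβ : β ≤ 0) (hκ : 0 ≤ κ) :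
    ‖∫ x in a..(1:ℝ), Complex.exp ((Λ * (β*x - x^4/2 - κ*x^8) : ℝ) * Complex.I) * (x:ℂ)‖ ≤
      (5/2/a^2) / |Λ| := by
  have hicc : uIcc a 1 = Icc a 1 := uIcc_of_le ha1
  set P : ℝ → ℝ := fun x => β - 2*x^3 - 8*κ*x^7 with hP
  set v : ℝ → ℝ := fun x => x / P x with hv
  set vd : ℝ → ℝ := fun x => (β + 4*x^3 + 48*κ*x^7) / (P x)^2 with hvd
  have hPneg : ∀ x ∈ Icc a 1, P x ≤ -(2*x^3) := by
    intro x hx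
    have hx0 : 0 < x := lt_of_lt_of_le ha hx.1
    simp only [hP]
    nlinarith [pow_pos hx0 7]
  have hne : ∀ x ∈ Icc a 1, P x ≠ 0 := by
    intro x hx
    have hx0 : 0 < x := lt_of_lt_of_le ha hx.1
    have := hPneg x hx
    nlinarith [pow_pos hx0 3]
  have hPabs : ∀ x ∈ Icc a 1, 2*x^3 ≤ |P x| := by
    intro x hx
    rw [abs_of_nonpos (by nlinarith [hPneg x hx, pow_pos (lt_of_lt_of_le ha hx.1) 3])]
    linarith [hPneg x hx]
  have hPc : Continuous P := by fun_prop
  have hvD : ∀ x ∈ Icc a 1, HasDerivAt v (vd x) x := by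
    intro x hx
    have h := (hasDerivAt_id x).div (P_deriv κ β x) (hne x hx)
    refine h.congr_deriv ?_
    simp only [hvd, hP]
    congr 1
    simp [id]
    ring
  have hcong : (∫ x in a..(1:ℝ), Complex.exp ((Λ * (β*x - x^4/2 - κ*x^8) : ℝ) * Complex.I) * (x:ℂ))
      = ∫ x in a..(1:ℝ), Complex.exp ((Λ * (β*x - x^4/2 - κ*x^8) : ℝ) * Complex.I)
          * ((P x : ℂ) * (v x : ℂ)) := by
    apply intervalIntegral.integral_congr
    intro x hx
    have hne' := hne x (hicc ▸ hx)
    simp only [hv]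
    congr 1
    rw [← Complex.ofReal_mul]
    congr 1
    field_simp
  rw [hcong]
  have hvdc : ContinuousOn vd (Icc a 1) :=
    ContinuousOn.div (by fun_prop) ((hPc.continuousOn).pow 2)
      (fun x hx => pow_ne_zero 2 (hne x hx))
  have main := ibp Λ a 1 hΛ ha1 (fun y => β*y - y^4/2 - κ*y^8) P v vd
    (fun x _ => phase_deriv κ β x) hvD hPc.continuousOn hvdc
  refine main.trans ?_
  apply div_le_div_of_nonneg_right ?_ (abs_nonneg Λ)
  -- bound the three terms
  have hva : |v a| ≤ 1/(2*a^2) := by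
    have h1 := hPabs a ⟨le_refl a, ha1⟩
    have h2 : (0:ℝ) < 2*a^3 := by positivity
    simp only [hv, abs_div]
    rw [div_le_div_iff₀ (lt_of_lt_of_le h2 h1) (by positivity)]
    rw [_root_.abs_of_nonneg ha.le]
    nlinarith
  have hv1 : |v 1| ≤ 1/2 := by
    have h1 := hPabs 1 ⟨ha1, le_refl 1⟩
    norm_num at h1
    simp only [hv, abs_div, abs_one]
    rw [div_le_div_iff₀ (by linarith) (by norm_num)]
    linarith
  have hvd_bound : ∀ x ∈ Icc a 1, |vd x| ≤ 3/x^3 := by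
    intro x hx
    have hx0 : 0 < x := lt_of_lt_of_le ha hx.1
    have h1 := hPabs x hx
    have h2 : (0:ℝ) < 2*x^3 := by positivity
    have h3 : 0 < |P x| := lt_of_lt_of_le h2 h1
    simp only [hvd, abs_div, abs_pow, sq_abs]
    have hnum : |β + 4*x^3 + 48*κ*x^7| ≤ 6 * |P x| := by
      rw [abs_le]
      constructor
      · rw [abs_of_nonpos (by nlinarith [hPneg x hx] : P x ≤ 0)]
        simp only [hP]
        nlinarith [pow_pos hx0 7, pow_pos hx0 3]
      · rw [abs_of_nonpos (by nlinarith [hPneg x hx] : P x ≤ 0)]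
        simp only [hP]
        nlinarith [pow_pos hx0 7, pow_pos hx0 3]
    calc |β + 4*x^3 + 48*κ*x^7| / (P x)^2 ≤ 6 * |P x| / (P x)^2 := by
          apply div_le_div_of_nonneg_right hnum (sq_nonneg _)
      _ = 6 / |P x| := by
          rw [← sq_abs (P x)]
          rw [pow_two]
          rw [mul_div_assoc]
          rw [div_mul_eq_div_div]
          rw [div_self h3.ne']
          rw [mul_one_div]
      _ ≤ 6 / (2*x^3) := by
          gcongr
      _ = 3/x^3 := by field_simp; ring
  have hint_vd : (∫ x in a..(1:ℝ), |vd x|) ≤ 3/(2*a^2) - 3/2 := by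
    have hFTC : (∫ x in a..(1:ℝ), 3/x^3) = 3/(2*a^2) - 3/2 := by
      have hF : ∀ x ∈ uIcc a (1:ℝ), HasDerivAt (fun y : ℝ => -(3/2)/y^2) (3/x^3) x := by
        intro x hx
        rw [hicc] at hx
        have hx0 : x ≠ 0 := (lt_of_lt_of_le ha hx.1).ne'
        have h := ((hasDerivAt_pow 2 x).inv (pow_ne_zero 2 hx0)).const_mul (-(3/2) : ℝ)
        refine h.congr_deriv ?_
        push_cast
        field_simp
      have hint : IntervalIntegrable (fun x : ℝ => 3/x^3) volume a 1 := by
        apply ContinuousOn.intervalIntegrable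
        rw [hicc]
        exact ContinuousOn.div continuousOn_const (by fun_prop)
          (fun x hx => pow_ne_zero 3 (lt_of_lt_of_le ha hx.1).ne')
      rw [intervalIntegral.integral_eq_sub_of_hasDerivAt hF hint]
      field_simp
      ring
    rw [← hFTC]
    apply intervalIntegral.integral_mono_on ha1
    · exact ((hvdc.mono (by rw [hicc] : uIcc a 1 ⊆ Icc a 1)).abs).intervalIntegrable
    · apply ContinuousOn.intervalIntegrable
      rw [hicc]
      exact ContinuousOn.div continuousOn_const (by fun_prop)
        (fun x hx => pow_ne_zero 3 (lt_of_lt_of_le ha hx.1).ne')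
    · exact hvd_bound
  have hA : (0:ℝ) < a^2 := by positivity
  have hdiff : 5/2/a^2 - (1/(2*a^2) + 1/2 + (3/(2*a^2) - 3/2)) = 1/(2*a^2) + 1 := by
    field_simp
    ring
  have hpos : (0:ℝ) ≤ 1/(2*a^2) := by positivity
  linarith

lemma abs_div_le' {c p m M : ℝ} (hc : 0 ≤ c) (hm : 0 < m) (hmp : m ≤ |p|) (hcM : c ≤ m * M) :
    |c / p| ≤ M := by
  have hM : 0 ≤ M := by nlinarith
  rw [abs_div, _root_.abs_of_nonneg hc, div_le_iff₀ (lt_of_lt_of_le hm hmp)]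
  calc c ≤ m*M := hcM
    _ ≤ |p| * M := mul_le_mul_of_nonneg_right hmp hM
    _ = M * |p| := mul_comm _ _

lemma left_bound (κ r₀ x : ℝ) (hκ : 0 ≤ κ) (h1 : 0 ≤ x) (h2 : x ≤ r₀) :
    2*(r₀ - x)*r₀^2 ≤ (2*r₀^3 + 8*κ*r₀^7) - 2*x^3 - 8*κ*x^7 := by
  have h7 : x^7 ≤ r₀^7 := pow_le_pow_left₀ h1 h2 7
  have hc : 2*(r₀ - x)*r₀^2 ≤ 2*(r₀^3 - x^3) := by
    nlinarith [mul_nonneg (mul_nonneg (sub_nonneg.2 h2) h1) (add_nonneg (h1.trans h2) h1)]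
  nlinarith [mul_nonneg hκ (sub_nonneg.2 h7)]

lemma right_bound (κ r₀ x : ℝ) (hκ : 0 ≤ κ) (h0 : 0 ≤ r₀) (h2 : r₀ ≤ x) :
    2*(x - r₀)*x^2 ≤ -((2*r₀^3 + 8*κ*r₀^7) - 2*x^3 - 8*κ*x^7) := by
  have h1 : 0 ≤ x := h0.trans h2
  have h7 : r₀^7 ≤ x^7 := pow_le_pow_left₀ h0 h2 7
  have hc : 2*(x - r₀)*x^2 ≤ 2*(x^3 - r₀^3) := by
    nlinarith [mul_nonneg (mul_nonneg (sub_nonneg.2 h2) h0) (add_nonneg h1 h0)]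
  nlinarith [mul_nonneg hκ (sub_nonneg.2 h7)]

lemma aux_one_le (u : ℝ) (h : 1 ≤ 3*u) : 1 ≤ 20*u^2 := by nlinarith

lemma aux_pow4_le_sq (u : ℝ) (h0 : 0 ≤ u) (h1 : u ≤ 1) : u^4 ≤ u^2 :=
  pow_le_pow_of_le_one h0 h1 (by norm_num)

lemma aux_b1 (r₀ u x c : ℝ) (hu : 0 < u) (hr : r₀ ≤ 2*u) (hx : 3*u ≤ x)
    (hkey : 2*(x - r₀)*x^2 ≤ c) : (2/3)*x^3 ≤ c := by
  have h1 : x/3 ≤ x - r₀ := by linarith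
  nlinarith [mul_le_mul_of_nonneg_right h1 (sq_nonneg x)]

lemma aux_eta (η u : ℝ) (h0 : 0 < η) (h : η < u/2) : 2*η^2 ≤ u^2 := by nlinarith

lemma aux_end (η r₀ : ℝ) (h0 : 0 ≤ η) (h1 : 0 ≤ r₀) : (r₀+η)*(η*r₀) ≤ η*(r₀+η)^2 := by
  nlinarith [mul_nonneg (mul_nonneg h0 h0) (add_nonneg h1 h0)]

lemma aux_mul_lb (η d b : ℝ) (hη : η ≤ d) (hb : 0 ≤ b) (h0 : 0 ≤ η) :
    2*η*b ≤ 2*d*b := by nlinarith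

set_option maxHeartbeats 2000000 in
theorem stmt14 (κ : ℝ) (hκ : 0 < κ) :
    ∃ C : ℝ, 0 < C ∧ ∀ β lam : ℝ, |β| ≤ 1 → 1 ≤ |lam| →
      ‖∫ r in (0:ℝ)..1,
          Complex.exp (Complex.ofReal (-(2 * Real.pi * lam *
              (β*r - r^4/2 - κ*r^8))) * Complex.I) * (r : ℂ)‖ ≤
        C * |lam| ^ (-(1/2 : ℝ)) := by
  refine ⟨20, by norm_num, ?_⟩
  intro β lam hβ hlam
  have hπ := Real.pi_pos
  have hlam0 : (0:ℝ) < |lam| := lt_of_lt_of_le one_pos hlam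
  have hlamne : lam ≠ 0 := by
    intro h; rw [h] at hlam0; simp at hlam0
  set Λ : ℝ := -(2 * Real.pi * lam) with hΛdef
  have hΛ0 : Λ ≠ 0 := by
    rw [hΛdef, neg_ne_zero]
    exact mul_ne_zero (by positivity) hlamne
  have hΛabs : |Λ| = 2 * Real.pi * |lam| := by
    rw [hΛdef, abs_neg, abs_mul, _root_.abs_of_pos (by positivity : (0:ℝ) < 2*Real.pi)]
  set u : ℝ := |lam| ^ (-(1/4 : ℝ)) with hudef
  have hu0 : 0 < u := Real.rpow_pos_of_pos hlam0 _
  have hu1 : u ≤ 1 := Real.rpow_le_one_of_one_le_of_nonpos hlam (by norm_num)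
  have hu4 : u^4 = |lam|⁻¹ := by
    rw [hudef, ← Real.rpow_natCast (|lam| ^ (-(1/4:ℝ))) 4, ← Real.rpow_mul (abs_nonneg lam)]
    norm_num [Real.rpow_neg_one]
  have hu2 : |lam| ^ (-(1/2 : ℝ)) = u^2 := by
    rw [hudef, ← Real.rpow_natCast (|lam| ^ (-(1/4:ℝ))) 2, ← Real.rpow_mul (abs_nonneg lam)]
    norm_num
  have hinvΛ : |Λ|⁻¹ ≤ u^4 := by
    rw [hu4]
    apply inv_anti₀ hlam0
    rw [hΛabs]
    nlinarith [Real.pi_gt_three]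
  have hdivΛ : ∀ X : ℝ, 0 ≤ X → X / |Λ| ≤ X * u^4 := by
    intro X hX
    rw [div_eq_mul_inv]
    exact mul_le_mul_of_nonneg_left hinvΛ hX
  set f : ℝ → ℂ := fun r => Complex.exp ((Λ * (β*r - r^4/2 - κ*r^8) : ℝ) * Complex.I) * (r:ℂ)
    with hf
  have hgoal : (fun r : ℝ =>
      Complex.exp (Complex.ofReal (-(2 * Real.pi * lam *
        (β*r - r^4/2 - κ*r^8))) * Complex.I) * (r : ℂ)) = f := by
    funext x
    simp only [hf]
    rw [Complex.ofReal_inj.2 (show -(2 * Real.pi * lam * (β*x - x^4/2 - κ*x^8))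
        = Λ * (β*x - x^4/2 - κ*x^8) from by rw [hΛdef]; ring)]
  rw [hgoal, hu2]
  have hfc : Continuous f := by
    apply Continuous.mul ?_ Complex.continuous_ofReal
    apply Complex.continuous_exp.comp
    apply Continuous.mul ?_ continuous_const
    exact Complex.continuous_ofReal.comp (by continuity)
  have hInt : ∀ c d : ℝ, IntervalIntegrable f volume c d :=
    fun c d => hfc.intervalIntegrable c d
  have htriv : ∀ c d : ℝ, 0 ≤ c → c ≤ d → ‖∫ r in c..d, f r‖ ≤ d * (d - c) := by
    intro c d hc hcd
    have hb : ∀ x ∈ Set.uIoc c d, ‖f x‖ ≤ d := by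
      intro x hx
      rw [Set.uIoc_of_le hcd] at hx
      have : ‖f x‖ = |x| := by
        rw [hf]
        simp only [norm_mul, Complex.norm_exp_ofReal_mul_I, one_mul,
          Complex.norm_real, Real.norm_eq_abs]
      rw [this, _root_.abs_of_nonneg (hc.trans hx.1.le)]
      exact hx.2
    have h := intervalIntegral.norm_integral_le_of_norm_le_const hb
    rwa [_root_.abs_of_nonneg (by linarith)] at h
  have hβ1 : β ≤ 1 := (abs_le.mp hβ).2
  clear_value Λ u
  clear hΛdef hudef hΛabs hgoal
  rcases le_or_gt β 0 with hβ0 | hβ0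
  · -- Case A : β ≤ 0
    rw [show (∫ r in (0:ℝ)..1, f r)
        = (∫ r in (0:ℝ)..u, f r) + ∫ r in u..(1:ℝ), f r from
      (intervalIntegral.integral_add_adjacent_intervals (hInt 0 u) (hInt u 1)).symm]
    have h1 : ‖∫ r in (0:ℝ)..u, f r‖ ≤ u^2 := by
      have h := htriv 0 u le_rfl hu0.le
      have heq : u * (u - 0) = u^2 := by ring
      linarith
    have h2 : ‖∫ r in u..(1:ℝ), f r‖ ≤ (5/2/u^2) * u^4 := by
      refine le_trans ?_ (hdivΛ (5/2/u^2) (by positivity))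
      exact piece_tv κ β Λ u hΛ0 hu0 hu1 hβ0 hκ.le
    have h3 : (5/2/u^2) * u^4 = (5/2) * u^2 := by
      field_simp
    calc ‖(∫ r in (0:ℝ)..u, f r) + ∫ r in u..(1:ℝ), f r‖
        ≤ ‖∫ r in (0:ℝ)..u, f r‖ + ‖∫ r in u..(1:ℝ), f r‖ := norm_add_le _ _
      _ ≤ u^2 + (5/2) * u^2 := by rw [← h3]; exact add_le_add h1 h2
      _ ≤ 20 * u^2 := by nlinarith [sq_nonneg u]
  · -- Case B : 0 < β, find critical point r₀
    have hcontP : ContinuousOn (fun x : ℝ => β - 2*x^3 - 8*κ*x^7) (Icc 0 1) := by fun_prop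
    have hP1neg : β - 2*(1:ℝ)^3 - 8*κ*(1:ℝ)^7 < 0 := by nlinarith
    obtain ⟨r₀, hr₀mem, hr₀⟩ := intermediate_value_Icc' (by norm_num : (0:ℝ) ≤ 1) hcontP
      ⟨hP1neg.le, by norm_num [hβ0.le]⟩
    have hr₀' : β - 2*r₀^3 - 8*κ*r₀^7 = 0 := hr₀
    have hr₀0 : 0 < r₀ := by
      rcases hr₀mem.1.lt_or_eq with h | h
      · exact h
      · exfalso; rw [← h] at hr₀'; nlinarith
    have hr₀1 : r₀ < 1 := by
      rcases hr₀mem.2.lt_or_eq with h | h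
      · exact h
      · exfalso; rw [h] at hr₀'; nlinarith
    have hβeq : β = 2*r₀^3 + 8*κ*r₀^7 := by linarith
    have hL : ∀ x : ℝ, 0 ≤ x → x ≤ r₀ → 2*(r₀ - x)*r₀^2 ≤ β - 2*x^3 - 8*κ*x^7 := by
      intro x h1 h2
      rw [hβeq]
      have := left_bound κ r₀ x hκ.le h1 h2
      linarith
    have hR : ∀ x : ℝ, r₀ ≤ x → 2*(x - r₀)*x^2 ≤ -(β - 2*x^3 - 8*κ*x^7) := by
      intro x h2
      rw [hβeq]
      have := right_bound κ r₀ x hκ.le hr₀0.le h2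
      linarith
    rcases le_or_gt r₀ (2*u) with hB1 | hB2
    · -- Case B1
      rcases le_or_gt 1 (3*u) with hu3 | hu3
      · -- trivial bound
        have h := htriv 0 1 le_rfl (by norm_num)
        have h2 := aux_one_le u hu3
        have h13 : (1:ℝ)*(1-0) = 1 := by norm_num
        linarith
      · -- split at a = 3u
        have ha1 : 3*u ≤ 1 := hu3.le
        have ha0 : 0 < 3*u := by positivity
        rw [show (∫ r in (0:ℝ)..1, f r)
            = (∫ r in (0:ℝ)..(3*u), f r) + ∫ r in (3*u)..(1:ℝ), f r from
          (intervalIntegral.integral_add_adjacent_intervals (hInt 0 (3*u)) (hInt (3*u) 1)).symm]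
        have hPneg : ∀ x ∈ Icc (3*u) 1, (2/3)*x^3 ≤ -(β - 2*x^3 - 8*κ*x^7) := by
          intro x hx
          have hxr₀ : r₀ ≤ x := by linarith [hx.1]
          exact aux_b1 r₀ u x _ hu0 hB1 hx.1 (hR x hxr₀)
        have hne : ∀ x ∈ Icc (3*u) 1, β - 2*x^3 - 8*κ*x^7 ≠ 0 := by
          intro x hx
          have h := hPneg x hx
          have hx0 : 0 < x := lt_of_lt_of_le ha0 hx.1
          have hpos : 0 < (2/3)*x^3 := by positivity
          intro hzero
          rw [hzero] at h
          norm_num at h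
          linarith
        have hp := piece_mono κ β Λ (3*u) 1 hΛ0 ha1 ha0.le hβ0.le hκ.le hne
        have hend1 : |(3*u) / (β - 2*(3*u)^3 - 8*κ*(3*u)^7)| ≤ 1/(6*u^2) := by
          apply abs_div_le' ha0.le (by positivity : (0:ℝ) < (2/3)*(3*u)^3)
          · have h := hPneg (3*u) ⟨le_refl _, ha1⟩
            have hpos : 0 < (2/3)*(3*u)^3 := by positivity
            rw [abs_of_neg (by linarith)]
            linarith
          · rw [show (2/3)*(3*u)^3 * (1/(6*u^2)) = 3*u^3/u^2 by ring]
            rw [show 3*u^3/u^2 = 3*u by field_simp]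
        have hend2 : |(1:ℝ) / (β - 2*(1:ℝ)^3 - 8*κ*(1:ℝ)^7)| ≤ 3/2 := by
          apply abs_div_le' (by norm_num) (by norm_num : (0:ℝ) < 2/3)
          · have h := hPneg 1 ⟨ha1, le_refl 1⟩
            rw [abs_of_neg hP1neg]
            norm_num at h ⊢
            linarith
          · norm_num
        have h2 : ‖∫ r in (3*u)..(1:ℝ), f r‖ ≤ (2*(1/(6*u^2) + 3/2)) * u^4 := by
          refine hp.trans ?_
          refine le_trans ?_ (hdivΛ (2*(1/(6*u^2) + 3/2)) (by positivity))
          apply div_le_div_of_nonneg_right ?_ (abs_nonneg Λ)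
          linarith [hend1, hend2]
        have h1 : ‖∫ r in (0:ℝ)..(3*u), f r‖ ≤ 9*u^2 := by
          have h := htriv 0 (3*u) le_rfl ha0.le
          have heq : (3*u) * ((3*u) - 0) = 9*u^2 := by ring
          linarith
        have hcalc : (2*(1/(6*u^2) + 3/2)) * u^4 = u^2/3 + 3*u^4 := by
          field_simp
          ring
        have hu42 : u^4 ≤ u^2 := aux_pow4_le_sq u hu0.le hu1
        calc ‖(∫ r in (0:ℝ)..(3*u), f r) + ∫ r in (3*u)..(1:ℝ), f r‖
            ≤ ‖∫ r in (0:ℝ)..(3*u), f r‖ + ‖∫ r in (3*u)..(1:ℝ), f r‖ := norm_add_le _ _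
          _ ≤ 9*u^2 + (u^2/3 + 3*u^4) := by rw [← hcalc]; exact add_le_add h1 h2
          _ ≤ 20 * u^2 := by nlinarith [aux_pow4_le_sq u hu0.le hu1]
    · -- Case B2
      set η : ℝ := u^2/r₀ with hηdef
      clear_value η
      have hη0 : 0 < η := by rw [hηdef]; positivity
      have hηr₀ : η * r₀ = u^2 := by rw [hηdef]; field_simp
      have hηu : η < u/2 := by
        rw [hηdef, div_lt_iff₀ hr₀0]
        nlinarith
      have hm1pos : 0 < r₀ - η := by linarith
      set m₂ : ℝ := min 1 (r₀ + η) with hm₂def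
      clear_value m₂
      have hm₂le1 : m₂ ≤ 1 := by rw [hm₂def]; exact min_le_left _ _
      have hm₂ler : m₂ ≤ r₀ + η := by rw [hm₂def]; exact min_le_right _ _
      have hrm₂ : r₀ ≤ m₂ := by rw [hm₂def]; exact le_min hr₀1.le (by linarith)
      have hsplit1 : r₀ - η ≤ m₂ := by linarith
      rw [show (∫ r in (0:ℝ)..1, f r)
          = ((∫ r in (0:ℝ)..(r₀ - η), f r) + ∫ r in (r₀ - η)..m₂, f r)
            + ∫ r in m₂..(1:ℝ), f r from by
        rw [intervalIntegral.integral_add_adjacent_intervals (hInt 0 (r₀ - η)) (hInt (r₀-η) m₂),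
          intervalIntegral.integral_add_adjacent_intervals (hInt 0 m₂) (hInt m₂ 1)]]
      -- piece 1
      have hPpos : ∀ x ∈ Icc (0:ℝ) (r₀ - η), 2*η*r₀^2 ≤ β - 2*x^3 - 8*κ*x^7 := by
        intro x hx
        have h := hL x hx.1 (by linarith [hx.2])
        have hηrx : η ≤ r₀ - x := by linarith [hx.2]
        have := aux_mul_lb η (r₀ - x) (r₀^2) hηrx (sq_nonneg r₀) hη0.le
        linarith
      have hne1 : ∀ x ∈ Icc (0:ℝ) (r₀ - η), β - 2*x^3 - 8*κ*x^7 ≠ 0 := by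
        intro x hx
        have h := hPpos x hx
        have hpos : 0 < 2*η*r₀^2 := by positivity
        intro hzero
        rw [hzero] at h
        linarith
      have hp1 := piece_mono κ β Λ 0 (r₀ - η) hΛ0 hm1pos.le le_rfl hβ0.le hκ.le hne1
      have h1 : ‖∫ r in (0:ℝ)..(r₀ - η), f r‖ ≤ 2*(1/(2*u^2)) * u^4 := by
        refine hp1.trans ?_
        refine le_trans ?_ (hdivΛ (2*(1/(2*u^2))) (by positivity))
        apply div_le_div_of_nonneg_right ?_ (abs_nonneg Λ)
        have hz : |(0:ℝ) / (β - 2*(0:ℝ)^3 - 8*κ*(0:ℝ)^7)| = 0 := by norm_num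
        have hend : |(r₀ - η) / (β - 2*(r₀-η)^3 - 8*κ*(r₀-η)^7)| ≤ 1/(2*u^2) := by
          apply abs_div_le' hm1pos.le (by positivity : (0:ℝ) < 2*η*r₀^2)
          · exact (hPpos (r₀ - η) ⟨hm1pos.le, le_refl _⟩).trans (le_abs_self _)
          · rw [show 2*η*r₀^2 * (1/(2*u^2)) = η*r₀*r₀/u^2 by ring, hηr₀]
            rw [show u^2*r₀/u^2 = r₀ from by field_simp]
            linarith
        rw [hz]
        linarith
      -- piece 2 (middle)
      have h2 : ‖∫ r in (r₀ - η)..m₂, f r‖ ≤ 3*u^2 := by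
        have h := htriv (r₀ - η) m₂ hm1pos.le hsplit1
        have hlen : m₂ * (m₂ - (r₀ - η)) ≤ (r₀ + η) * (2*η) := by
          apply mul_le_mul hm₂ler (by linarith) (by linarith) (by linarith)
        have hval : (r₀ + η) * (2*η) = 2*u^2 + 2*η^2 := by
          linear_combination 2*hηr₀
        have hη2 : 2*η^2 ≤ u^2 := aux_eta η u hη0 hηu
        linarith
      -- piece 3 (right)
      have h3 : ‖∫ r in m₂..(1:ℝ), f r‖ ≤ 2*(1/(2*u^2) + 1/(2*u^2)) * u^4 := by
        rcases le_or_gt 1 (r₀ + η) with hc | hc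
        · have hm₂eq : m₂ = 1 := by rw [hm₂def]; exact min_eq_left (by linarith)
          rw [hm₂eq, intervalIntegral.integral_same]
          rw [norm_zero]
          positivity
        · have hm₂eq : m₂ = r₀ + η := by rw [hm₂def]; exact min_eq_right hc.le
          have hPneg3 : ∀ x ∈ Icc (r₀ + η) 1, 2*η*x^2 ≤ -(β - 2*x^3 - 8*κ*x^7) := by
            intro x hx
            have h := hR x (by linarith [hx.1])
            have hηx : η ≤ x - r₀ := by linarith [hx.1]
            have := aux_mul_lb η (x - r₀) (x^2) hηx (sq_nonneg x) hη0.le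
            linarith
          have hne3 : ∀ x ∈ Icc (r₀ + η) 1, β - 2*x^3 - 8*κ*x^7 ≠ 0 := by
            intro x hx
            have h := hPneg3 x hx
            have hx0 : 0 < x := lt_of_lt_of_le (by linarith) hx.1
            have hpos : 0 < 2*η*x^2 := by positivity
            intro hzero
            rw [hzero] at h
            norm_num at h
            linarith
          have hp3 := piece_mono κ β Λ (r₀ + η) 1 hΛ0 hc.le (by linarith) hβ0.le hκ.le hne3
          rw [hm₂eq]
          refine hp3.trans ?_
          refine le_trans ?_ (hdivΛ (2*(1/(2*u^2) + 1/(2*u^2))) (by positivity))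
          apply div_le_div_of_nonneg_right ?_ (abs_nonneg Λ)
          have hend1 : |(r₀ + η) / (β - 2*(r₀+η)^3 - 8*κ*(r₀+η)^7)| ≤ 1/(2*u^2) := by
            apply abs_div_le' (by linarith) (by positivity : (0:ℝ) < 2*η*(r₀+η)^2)
            · have h := hPneg3 (r₀ + η) ⟨le_refl _, hc.le⟩
              have hpos : 0 < 2*η*(r₀+η)^2 := by positivity
              rw [abs_of_neg (by linarith)]
              linarith
            · rw [show 2*η*(r₀+η)^2 * (1/(2*u^2)) = η*(r₀+η)^2/u^2 by ring]
              rw [le_div_iff₀ (by positivity : (0:ℝ) < u^2)]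
              calc (r₀+η)*u^2 = (r₀+η)*(η*r₀) := by rw [hηr₀]
                _ ≤ η*(r₀+η)^2 := aux_end η r₀ hη0.le hr₀0.le
          have hend2 : |(1:ℝ) / (β - 2*(1:ℝ)^3 - 8*κ*(1:ℝ)^7)| ≤ 1/(2*u^2) := by
            apply abs_div_le' (by norm_num) (by positivity : (0:ℝ) < 2*η*(1:ℝ)^2)
            · have h := hPneg3 1 ⟨hc.le, le_refl _⟩
              rw [abs_of_neg hP1neg]
              norm_num at h ⊢
              linarith
            · rw [show 2*η*(1:ℝ)^2 * (1/(2*u^2)) = η/u^2 by ring]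
              rw [show η/u^2 = 1/r₀ from by rw [← hηr₀]; field_simp]
              rw [le_div_iff₀ hr₀0]
              linarith
          linarith [hend1, hend2]
      have hval1 : 2*(1/(2*u^2)) * u^4 = u^2 := by field_simp
      have hval3 : 2*(1/(2*u^2) + 1/(2*u^2)) * u^4 = 2*u^2 := by field_simp; ring
      calc ‖((∫ r in (0:ℝ)..(r₀ - η), f r) + ∫ r in (r₀ - η)..m₂, f r)
            + ∫ r in m₂..(1:ℝ), f r‖
          ≤ ‖(∫ r in (0:ℝ)..(r₀ - η), f r) + ∫ r in (r₀ - η)..m₂, f r‖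
            + ‖∫ r in m₂..(1:ℝ), f r‖ := norm_add_le _ _
        _ ≤ (‖∫ r in (0:ℝ)..(r₀ - η), f r‖ + ‖∫ r in (r₀ - η)..m₂, f r‖)
            + ‖∫ r in m₂..(1:ℝ), f r‖ := by gcongr; exact norm_add_le _ _
        _ ≤ (2*(1/(2*u^2)) * u^4 + 3*u^2) + 2*(1/(2*u^2) + 1/(2*u^2)) * u^4 :=
            add_le_add (add_le_add h1 h2) h3
        _ = (u^2 + 3*u^2) + 2*u^2 := by rw [hval1, hval3]
        _ ≤ 20 * u^2 := by nlinarith [sq_nonneg u]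
end

section
/- There exists an absolute constant C > 0 such that for all real r with 0 < r ≤ 1 and all real λ with |λ| ≥ 1, | ∫_0^{π/2} e^{−2πiλ r cos θ} r dθ | ≤ C |λ|^{−1/2}. -/
open MeasureTheory Real

noncomputable def Ef (c θ : ℝ) : ℂ := Complex.exp (Complex.ofReal (-(c * Real.cos θ)) * Complex.I)

lemma Ef_cont (c : ℝ) : Continuous (Ef c) := by
  unfold Ef; fun_prop

lemma Ef_norm (c θ : ℝ) : ‖Ef c θ‖ = 1 := Complex.norm_exp_ofReal_mul_I _

lemma Ef_hasDerivAt (c θ : ℝ) :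
    HasDerivAt (Ef c) (Ef c θ * (Complex.ofReal (c * Real.sin θ) * Complex.I)) θ := by
  have h1 : HasDerivAt (fun θ : ℝ => -(c * Real.cos θ)) (c * Real.sin θ) θ := by
    have := ((Real.hasDerivAt_cos θ).const_mul c).neg
    exact this.congr_deriv (by ring)
  exact (h1.ofReal_comp.mul_const Complex.I).cexp

lemma alg (E S Co cc : ℂ) (hS : S ≠ 0) (hc : cc ≠ 0) :
    (E * ((cc * S) * Complex.I) * (Complex.I * cc * S) - E * (Complex.I * cc * Co)) /
      (Complex.I * cc * S)^2
    = E - -(E * Co * Complex.I / (cc * S^2)) := by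
  have hI := Complex.I_ne_zero
  rw [div_eq_iff (pow_ne_zero 2 (mul_ne_zero (mul_ne_zero hI hc) hS))]
  field_simp
  linear_combination (-(E*Co)) * Complex.I_sq

lemma vdc (c δ : ℝ) (hc : c ≠ 0) (hδ : 0 < δ) (hδ2 : δ ≤ π / 2) :
    ‖∫ θ in δ..(π/2), Ef c θ‖ ≤ 3 / (|c| * Real.sin δ) := by
  have hsδ : 0 < Real.sin δ := Real.sin_pos_of_pos_of_lt_pi hδ (by linarith [Real.pi_pos])
  have hsδ1 : Real.sin δ ≤ 1 := Real.sin_le_one δ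
  have hcpos : 0 < |c| := abs_pos.mpr hc
  have hmem : ∀ θ ∈ Set.Icc δ (π/2), Real.sin δ ≤ Real.sin θ := by
    intro θ hθ
    rcases eq_or_lt_of_le hθ.1 with h | h
    · rw [h]
    · exact le_of_lt (Real.sin_lt_sin_of_lt_of_le_pi_div_two (by linarith) hθ.2 h)
  have hsin_pos : ∀ θ ∈ Set.Icc δ (π/2), 0 < Real.sin θ := fun θ hθ => lt_of_lt_of_le hsδ (hmem θ hθ)
  set g : ℝ → ℂ := fun θ => Ef c θ / (Complex.I * c * Real.sin θ) with hg_def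
  set h : ℝ → ℂ := fun θ => -(Ef c θ * Complex.ofReal (Real.cos θ) * Complex.I / (c * (Real.sin θ : ℂ)^2)) with hh_def
  have huIcc : Set.uIcc δ (π/2) = Set.Icc δ (π/2) := Set.uIcc_of_le hδ2
  have hDne : ∀ θ ∈ Set.Icc δ (π/2), (Complex.I * c * (Real.sin θ : ℂ)) ≠ 0 := by
    intro θ hθ
    have := hsin_pos θ hθ
    refine mul_ne_zero (mul_ne_zero Complex.I_ne_zero ?_) ?_
    · exact_mod_cast hc
    · exact_mod_cast this.ne'
  have hgderiv : ∀ θ ∈ Set.Icc δ (π/2), HasDerivAt g (Ef c θ - h θ) θ := by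
    intro θ hθ
    have hsne : (Real.sin θ : ℂ) ≠ 0 := by exact_mod_cast (hsin_pos θ hθ).ne'
    have hD : HasDerivAt (fun θ : ℝ => Complex.I * c * (Real.sin θ : ℂ))
        (Complex.I * c * (Real.cos θ : ℂ)) θ :=
      ((Real.hasDerivAt_sin θ).ofReal_comp).const_mul _
    have := (Ef_hasDerivAt c θ).div hD (hDne θ hθ)
    refine this.congr_deriv ?_
    have hcne : (c : ℂ) ≠ 0 := by exact_mod_cast hc
    simp only [hh_def]
    rw [show ((c * Real.sin θ : ℝ) : ℂ) = (c : ℂ) * (Real.sin θ : ℂ) from Complex.ofReal_mul _ _]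
    exact alg (Ef c θ) _ _ _ hsne hcne
  have hEint : IntervalIntegrable (Ef c) MeasureTheory.volume δ (π/2) :=
    (Ef_cont c).intervalIntegrable _ _
  have hhcont : ContinuousOn h (Set.uIcc δ (π/2)) := by
    rw [huIcc]
    apply ContinuousOn.neg
    apply ContinuousOn.div
    · exact ((((Ef_cont c).mul
        (Complex.continuous_ofReal.comp Real.continuous_cos)).mul
        continuous_const).continuousOn)
    · exact (continuous_const.mul
        ((Complex.continuous_ofReal.comp Real.continuous_sin).pow 2)).continuousOn
    · intro θ hθ
      have hs := hsin_pos θ hθ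
      refine mul_ne_zero ?_ (pow_ne_zero 2 ?_)
      · exact_mod_cast hc
      · exact_mod_cast hs.ne'
  have hhint : IntervalIntegrable h MeasureTheory.volume δ (π/2) :=
    hhcont.intervalIntegrable
  have hFTC : ∫ θ in δ..(π/2), (Ef c θ - h θ) = g (π/2) - g δ :=
    intervalIntegral.integral_eq_sub_of_hasDerivAt
      (fun θ hθ => hgderiv θ (huIcc ▸ hθ)) (hEint.sub hhint)
  have hsplit : ∫ θ in δ..(π/2), Ef c θ = (g (π/2) - g δ) + ∫ θ in δ..(π/2), h θ := by
    rw [← hFTC, intervalIntegral.integral_sub hEint hhint]; ring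
  have hgnorm : ∀ θ : ℝ, 0 < Real.sin θ → ‖g θ‖ = 1/(|c| * Real.sin θ) := by
    intro θ hs
    simp only [hg_def, norm_div, norm_mul, Complex.norm_I, Complex.norm_real,
      Ef_norm, one_mul, Real.norm_eq_abs, abs_of_pos hs]
  -- bound the remainder integral
  have hnormh : ∀ θ ∈ Set.Icc δ (π/2), ‖h θ‖ = Real.cos θ / (|c| * Real.sin θ ^ 2) := by
    intro θ hθ
    have hs := hsin_pos θ hθ
    have hcosnn : 0 ≤ Real.cos θ := Real.cos_nonneg_of_mem_Icc
      ⟨by linarith [hθ.1], hθ.2⟩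
    simp only [hh_def, norm_neg, norm_div, norm_mul, Complex.norm_I, Complex.norm_real,
      Ef_norm, one_mul, mul_one, Real.norm_eq_abs, norm_pow, abs_of_pos hs,
      abs_of_nonneg hcosnn, sq_abs]
  have hF : ∀ θ ∈ Set.Icc δ (π/2),
      HasDerivAt (fun θ : ℝ => -((|c| * Real.sin θ)⁻¹))
        (Real.cos θ / (|c| * Real.sin θ ^ 2)) θ := by
    intro θ hθ
    have hs := hsin_pos θ hθ
    have hne : |c| * Real.sin θ ≠ 0 := by positivity
    have := (((Real.hasDerivAt_sin θ).const_mul |c|).inv hne).neg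
    refine this.congr_deriv ?_
    field_simp
  have hFint : IntervalIntegrable (fun θ => Real.cos θ / (|c| * Real.sin θ ^ 2))
      MeasureTheory.volume δ (π/2) := by
    apply ContinuousOn.intervalIntegrable
    rw [huIcc]
    apply ContinuousOn.div Real.continuous_cos.continuousOn
      (continuous_const.mul (Real.continuous_sin.pow 2)).continuousOn
    intro θ hθ
    have hs := hsin_pos θ hθ
    exact mul_ne_zero hcpos.ne' (pow_ne_zero 2 hs.ne')
  have hFval : ∫ θ in δ..(π/2), Real.cos θ / (|c| * Real.sin θ ^ 2)
      = -((|c| * Real.sin (π/2))⁻¹) - -((|c| * Real.sin δ)⁻¹) :=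
    intervalIntegral.integral_eq_sub_of_hasDerivAt
      (fun θ hθ => hF θ (huIcc ▸ hθ)) hFint
  have hhbound : ‖∫ θ in δ..(π/2), h θ‖ ≤ (|c| * Real.sin δ)⁻¹ := by
    calc ‖∫ θ in δ..(π/2), h θ‖ ≤ ∫ θ in δ..(π/2), ‖h θ‖ :=
          intervalIntegral.norm_integral_le_integral_norm hδ2
      _ = ∫ θ in δ..(π/2), Real.cos θ / (|c| * Real.sin θ ^ 2) := by
          apply intervalIntegral.integral_congr
          intro θ hθ
          exact hnormh θ (huIcc ▸ hθ)
      _ ≤ (|c| * Real.sin δ)⁻¹ := by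
          rw [hFval, Real.sin_pi_div_two]
          have : 0 < |c| * 1 := by positivity
          have h2 : (0:ℝ) < (|c| * 1)⁻¹ := by positivity
          linarith
  have h1 : ‖g (π/2)‖ = 1/(|c| * 1) := by
    rw [hgnorm (π/2) (by rw [Real.sin_pi_div_two]; norm_num), Real.sin_pi_div_two]
  have h2 : ‖g δ‖ = 1/(|c| * Real.sin δ) := hgnorm δ hsδ
  have hfinal : ‖∫ θ in δ..(π/2), Ef c θ‖ ≤ ‖g (π/2)‖ + ‖g δ‖ + ‖∫ θ in δ..(π/2), h θ‖ := by
    rw [hsplit]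
    calc ‖g (π/2) - g δ + ∫ θ in δ..(π/2), h θ‖
        ≤ ‖g (π/2) - g δ‖ + ‖∫ θ in δ..(π/2), h θ‖ := norm_add_le _ _
      _ ≤ ‖g (π/2)‖ + ‖g δ‖ + ‖∫ θ in δ..(π/2), h θ‖ := by
          have := norm_sub_le (g (π/2)) (g δ); linarith
  rw [h1, h2] at hfinal
  have key : 1/(|c| * 1) ≤ 1/(|c| * Real.sin δ) := by
    apply one_div_le_one_div_of_le
    · positivity
    · nlinarith
  have hpos : 0 < |c| * Real.sin δ := by positivity
  have hinv : (|c| * Real.sin δ)⁻¹ = 1/(|c| * Real.sin δ) := (one_div _).symm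
  rw [hinv] at hhbound
  rw [div_eq_mul_inv 3, hinv]
  linarith


theorem stmt16 :
    ∃ C : ℝ, 0 < C ∧ ∀ r lam : ℝ, 0 < r → r ≤ 1 → 1 ≤ |lam| →
      ‖∫ θ in (0:ℝ)..(Real.pi/2),
          Complex.exp (Complex.ofReal (-(2 * Real.pi * lam * (r * Real.cos θ))) * Complex.I) *
            (r : ℂ)‖ ≤
        C * |lam| ^ (-(1/2 : ℝ)) := by
  refine ⟨7, by norm_num, fun r lam hr hr1 hlam => ?_⟩
  have hL : (0:ℝ) < |lam| := lt_of_lt_of_le one_pos hlam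
  have hlamne : lam ≠ 0 := fun h => by simp [h] at hL
  have hπ := Real.pi_gt_three
  have hπpos := Real.pi_pos
  set c : ℝ := 2 * π * lam * r with hc_def
  have hcne : c ≠ 0 := by
    simp only [hc_def]
    intro h
    rcases mul_eq_zero.mp h with h | h
    · rcases mul_eq_zero.mp h with h | h
      · rcases mul_eq_zero.mp h with h | h <;> [norm_num at h; exact absurd h hπpos.ne']
      · exact hlamne h
    · exact hr.ne' h
  have hc_abs : |c| = 2 * π * |lam| * r := by
    rw [hc_def, abs_mul, abs_mul, abs_mul, abs_of_pos hr, abs_two, abs_of_pos hπpos]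
  have hcpos : 0 < |c| := abs_pos.mpr hcne
  -- rewrite the integrand
  have hrw : (∫ θ in (0:ℝ)..(π/2),
      Complex.exp (Complex.ofReal (-(2 * π * lam * (r * Real.cos θ))) * Complex.I) * (r : ℂ))
      = (∫ θ in (0:ℝ)..(π/2), Ef c θ) * (r : ℂ) := by
    rw [← intervalIntegral.integral_mul_const]
    apply intervalIntegral.integral_congr
    intro θ _
    have : -(2 * π * lam * (r * Real.cos θ)) = -(c * Real.cos θ) := by rw [hc_def]; ring
    simp only [Ef]
    rw [this]
  rw [hrw]
  have hnorm : ‖(∫ θ in (0:ℝ)..(π/2), Ef c θ) * (r : ℂ)‖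
      = ‖∫ θ in (0:ℝ)..(π/2), Ef c θ‖ * r := by
    rw [norm_mul, Complex.norm_real, Real.norm_eq_abs, abs_of_pos hr]
  rw [hnorm]
  have hrpow : |lam| ^ (-(1/2:ℝ)) = (Real.sqrt |lam|)⁻¹ := by
    rw [Real.rpow_neg (abs_nonneg lam), ← Real.sqrt_eq_rpow]
  rw [hrpow]
  have hsqL : 0 < Real.sqrt |lam| := Real.sqrt_pos.mpr hL
  by_cases hbig : 1 ≤ |c|
  · -- oscillatory case
    have hsqc : 0 < Real.sqrt |c| := Real.sqrt_pos.mpr hcpos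
    have hsqc1 : 1 ≤ Real.sqrt |c| := by
      nlinarith [Real.sq_sqrt hcpos.le, Real.sqrt_nonneg |c|]
    set δ : ℝ := (Real.sqrt |c|)⁻¹ with hδ_def
    have hδpos : 0 < δ := by positivity
    have hδ1 : δ ≤ 1 := by
      rw [hδ_def]
      exact inv_le_one_of_one_le₀ hsqc1
    have hδ2 : δ ≤ π/2 := by linarith
    have hint1 : IntervalIntegrable (Ef c) MeasureTheory.volume 0 δ :=
      (Ef_cont c).intervalIntegrable _ _
    have hint2 : IntervalIntegrable (Ef c) MeasureTheory.volume δ (π/2) :=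
      (Ef_cont c).intervalIntegrable _ _
    have hsplit : (∫ θ in (0:ℝ)..(π/2), Ef c θ)
        = (∫ θ in (0:ℝ)..δ, Ef c θ) + ∫ θ in δ..(π/2), Ef c θ :=
      (intervalIntegral.integral_add_adjacent_intervals hint1 hint2).symm
    have hb1 : ‖∫ θ in (0:ℝ)..δ, Ef c θ‖ ≤ δ := by
      have := intervalIntegral.norm_integral_le_of_norm_le_const
        (C := 1) (f := Ef c) (a := (0:ℝ)) (b := δ) (fun θ _ => le_of_eq (Ef_norm c θ))
      rwa [one_mul, sub_zero, abs_of_pos hδpos] at this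
    have hb2 : ‖∫ θ in δ..(π/2), Ef c θ‖ ≤ 3 / (|c| * Real.sin δ) := vdc c δ hcne hδpos hδ2
    have hsin : 2/π * δ ≤ Real.sin δ := Real.mul_le_sin hδpos.le hδ2
    have hcδ : |c| * δ = Real.sqrt |c| := by
      rw [hδ_def]
      field_simp
      exact (Real.sq_sqrt hcpos.le).symm
    have hb2' : 3 / (|c| * Real.sin δ) ≤ 6 * (Real.sqrt |c|)⁻¹ := by
      have hπ4 := Real.pi_le_four
      have hden : 2/π * Real.sqrt |c| ≤ |c| * Real.sin δ := by
        calc 2/π * Real.sqrt |c| = |c| * (2/π * δ) := by rw [← hcδ]; ring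
          _ ≤ |c| * Real.sin δ := by
              apply mul_le_mul_of_nonneg_left hsin hcpos.le
      have hdpos : 0 < 2/π * Real.sqrt |c| := by positivity
      calc 3 / (|c| * Real.sin δ) ≤ 3 / (2/π * Real.sqrt |c|) := by
            apply div_le_div_of_nonneg_left (by norm_num) hdpos hden
        _ = 3*π/2 * (Real.sqrt |c|)⁻¹ := by
            field_simp
        _ ≤ 6 * (Real.sqrt |c|)⁻¹ := by
            have : (0:ℝ) ≤ (Real.sqrt |c|)⁻¹ := by positivity
            nlinarith
    have htot : ‖∫ θ in (0:ℝ)..(π/2), Ef c θ‖ ≤ 7 * (Real.sqrt |c|)⁻¹ := by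
      rw [hsplit]
      calc ‖(∫ θ in (0:ℝ)..δ, Ef c θ) + ∫ θ in δ..(π/2), Ef c θ‖
          ≤ ‖∫ θ in (0:ℝ)..δ, Ef c θ‖ + ‖∫ θ in δ..(π/2), Ef c θ‖ := norm_add_le _ _
        _ ≤ δ + 6 * (Real.sqrt |c|)⁻¹ := by linarith
        _ = 7 * (Real.sqrt |c|)⁻¹ := by rw [hδ_def]; ring
    -- r * 7/√|c| ≤ 7/√|lam|
    have hkey : r * Real.sqrt |lam| ≤ Real.sqrt |c| := by
      have : r * Real.sqrt |lam| = Real.sqrt (r^2 * |lam|) := by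
        rw [Real.sqrt_mul (sq_nonneg r), Real.sqrt_sq hr.le]
      rw [this]
      apply Real.sqrt_le_sqrt
      rw [hc_abs]
      nlinarith
    have hdiv : r / Real.sqrt |c| ≤ 1 / Real.sqrt |lam| := by
      rw [div_le_div_iff₀ hsqc hsqL]
      linarith
    calc ‖∫ θ in (0:ℝ)..(π/2), Ef c θ‖ * r ≤ (7 * (Real.sqrt |c|)⁻¹) * r :=
          mul_le_mul_of_nonneg_right htot hr.le
      _ = 7 * (r / Real.sqrt |c|) := by ring
      _ ≤ 7 * (1 / Real.sqrt |lam|) := by linarith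
      _ = 7 * (Real.sqrt |lam|)⁻¹ := by rw [one_div]
  · -- trivial case
    push_neg at hbig
    have htriv : ‖∫ θ in (0:ℝ)..(π/2), Ef c θ‖ ≤ π/2 := by
      have := intervalIntegral.norm_integral_le_of_norm_le_const
        (C := 1) (f := Ef c) (a := (0:ℝ)) (b := π/2) (fun θ _ => le_of_eq (Ef_norm c θ))
      rwa [one_mul, sub_zero, abs_of_pos (by linarith : (0:ℝ) < π/2)] at this
    have hbig' : 2 * π * |lam| * r < 1 := hc_abs ▸ hbig
    have hs1 : 1 ≤ Real.sqrt |lam| := by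
      nlinarith [Real.sq_sqrt hL.le, Real.sqrt_nonneg |lam|]
    have hsle : Real.sqrt |lam| ≤ |lam| := by
      nlinarith [Real.sq_sqrt hL.le]
    have key2 : 2 * r * Real.sqrt |lam| ≤ 1 := by
      have hm : 2 * r * Real.sqrt |lam| ≤ 2 * r * |lam| :=
        mul_le_mul_of_nonneg_left hsle (by linarith)
      have h6 : 6 * (|lam| * r) < 1 := by nlinarith [mul_pos hL hr]
      nlinarith
    have h2r : 2 * r ≤ 1 / Real.sqrt |lam| := by
      rw [le_div_iff₀ hsqL]; linarith
    calc ‖∫ θ in (0:ℝ)..(π/2), Ef c θ‖ * r ≤ (π/2) * r :=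
          mul_le_mul_of_nonneg_right htriv hr.le
      _ ≤ 2 * r := by nlinarith [Real.pi_le_four]
      _ ≤ 1 / Real.sqrt |lam| := h2r
      _ ≤ 7 * (Real.sqrt |lam|)⁻¹ := by
          rw [one_div]
          have h0 : 0 < (Real.sqrt |lam|)⁻¹ := inv_pos.mpr hsqL
          linarith
end
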